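/- Let P_1, ..., P_{d(d+1)/2} ∈ M_d(ℂ) be real orthogonal projections of common rank r (with 1 ≤ r < d), equiangular with common angle β = r(rd + r − 2)/((d+2)(d−1)), spanning the symmetric subspace S_d. Then there exists z ∈ ℂ with |z| = 1 such that the matrices U_i := I_d − (1−z)·P_i are unitary and satisfy tr(U_i* U_j) = 0 for all i ≠ j, if and only if 2r − 1 ≤ d ≤ 2r + 1. -/

import Mathlib

/-!
Complexified, the `P i` are Hermitian projections, so for every unimodular `z` each
`U i = 1 - (1 - z) P i` is unitary, and `tr (U i)ᴴ (U j) = d - |1 - z|² (r - β)` because on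
the unit circle `|1 - z|² = 2 Re (1 - z)`. As `z` runs over the circle, `|1 - z|² = 2 - 2 Re z`
runs over `[0, 4]`, so trace-orthogonality is achievable iff `d ≤ 4 (r - β)`. Clearing
denominators, this is `(d - 2r)² (d + 1) ≤ 2d`, which for integers means `|d - 2r| ≤ 1`.
-/

open Matrix

/-- The symmetric subspace `S_d` of `M_d(ℂ)`: matrices `A` with `Aᵀ = A`. -/
noncomputable def symMatrices (d : ℕ) : Submodule ℂ (Matrix (Fin d) (Fin d) ℂ) where
  carrier := {A : Matrix (Fin d) (Fin d) ℂ | Aᵀ = A}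
  add_mem' := by
    intro a b ha hb
    simp only [Set.mem_setOf_eq, Matrix.transpose_add] at *
    rw [ha, hb]
  zero_mem' := by simp
  smul_mem' := by
    intro c A hA
    simp only [Set.mem_setOf_eq, Matrix.transpose_smul] at *
    rw [hA]

theorem Matrix.trace_eq_rank_of_isIdempotentElem {n K : Type*} [Fintype n] [DecidableEq n]
    [Field K] {A : Matrix n n K} (hA : IsIdempotentElem A) : A.trace = A.rank := by
  have hproj : LinearMap.IsProj (LinearMap.range A.mulVecLin) A.mulVecLin :=
    LinearMap.IsIdempotentElem.isProj_range _ (hA.map Matrix.toLinAlgEquiv')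
  rw [Matrix.rank, ← hproj.trace]
  exact (Matrix.trace_toLin'_eq A).symm

theorem Matrix.trace_map_ofReal {n : Type*} [Fintype n] (A : Matrix n n ℝ) :
    (A.map Complex.ofReal).trace = A.trace :=
  (AddMonoidHom.map_trace Complex.ofRealHom A).symm

theorem Matrix.map_ofReal_mul {n : Type*} [Fintype n] (A B : Matrix n n ℝ) :
    (A * B).map Complex.ofReal = A.map Complex.ofReal * B.map Complex.ofReal :=
  Matrix.map_mul (f := Complex.ofRealHom)

theorem Matrix.isStarProjection_map_ofReal {n : Type*} [Fintype n] {A : Matrix n n ℝ}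
    (hidem : IsIdempotentElem A) (hsymm : A.IsSymm) :
    IsStarProjection (A.map Complex.ofReal) := by
  refine ⟨?_, ?_⟩
  · rw [IsIdempotentElem, ← map_ofReal_mul, hidem.eq]
  · ext a b
    simpa using congrFun (congrFun hsymm a) b

theorem IsIdempotentElem.one_sub_smul_mul_one_sub_smul {R A : Type*} [CommRing R] [Ring A]
    [Algebra R A] {Q : A} (hQ : IsIdempotentElem Q) (a b : R) :
    (1 - a • Q) * (1 - b • Q) = 1 - (a + b - a * b) • Q := by
  rw [sub_mul, mul_sub, mul_sub, one_mul, one_mul, mul_one, smul_mul_smul_comm, hQ.eq]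
  module

theorem IsStarProjection.one_sub_smul_mem_unitary {A : Type*} [Ring A] [StarRing A]
    [Algebra ℂ A] [StarModule ℂ A] {Q : A} (hQ : IsStarProjection Q) {z : ℂ}
    (hz : ‖z‖ = 1) :
    1 - (1 - z) • Q ∈ unitary A := by
  have hstar : star (1 - (1 - z) • Q) = 1 - (1 - star z) • Q := by
    rw [star_sub, star_one, star_smul, hQ.isSelfAdjoint.star_eq, star_sub, star_one]
  -- both products `star U * U`, `U * star U` equal `1 - (1 - |z|²) • Q`
  have hcoef : (1 - star z) + (1 - z) - (1 - star z) * (1 - z) = 0 := by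
    have hnorm : star z * z = 1 := by rw [Complex.star_def, Complex.conj_mul', hz]; norm_num
    linear_combination -hnorm
  rw [Unitary.mem_iff, hstar, hQ.isIdempotentElem.one_sub_smul_mul_one_sub_smul,
    hQ.isIdempotentElem.one_sub_smul_mul_one_sub_smul, add_comm (1 - z), mul_comm (1 - z), hcoef,
    zero_smul, sub_zero]
  exact ⟨rfl, rfl⟩

theorem Matrix.trace_conjTranspose_one_sub_smul_mul {n : Type*} [Fintype n] [DecidableEq n]
    {A B : Matrix n n ℂ} (hA : A.IsHermitian) (c : ℂ) :
    ((1 - c • A)ᴴ * (1 - c • B)).trace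
      = Fintype.card n - (star c * A.trace + c * B.trace) + star c * c * (A * B).trace := by
  rw [conjTranspose_sub, conjTranspose_one, conjTranspose_smul, hA.eq, sub_mul, mul_sub, mul_sub,
    one_mul, one_mul, mul_one, smul_mul_smul_comm]
  simp only [trace_sub, trace_one, trace_smul, smul_eq_mul]
  ring

theorem Matrix.trace_conjTranspose_one_sub_smul_mul_of_norm_eq_one {n : Type*} [Fintype n]
    [DecidableEq n] {A B : Matrix n n ℂ} (hA : A.IsHermitian) {t s : ℝ} (hAt : A.trace = t)
    (hBt : B.trace = t) (hAB : (A * B).trace = s) {z : ℂ} (hz : ‖z‖ = 1) :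
    ((1 - (1 - z) • A)ᴴ * (1 - (1 - z) • B)).trace
      = ((Fintype.card n - (2 - 2 * z.re) * (t - s) : ℝ) : ℂ) := by
  -- on the unit circle `|1 - z|² = 2 Re (1 - z) = 2 - 2 Re z`
  have hsum : star (1 - z) + (1 - z) = ((2 - 2 * z.re : ℝ) : ℂ) := by
    apply Complex.ext <;> simp; ring
  have hprod : star (1 - z) * (1 - z) = ((2 - 2 * z.re : ℝ) : ℂ) := by
    have hnorm : z.re * z.re + z.im * z.im = 1 := by
      rw [← Complex.normSq_apply, ← Complex.sq_norm, hz, one_pow]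
    apply Complex.ext <;> simp [Complex.mul_re, Complex.mul_im] <;> nlinarith
  rw [trace_conjTranspose_one_sub_smul_mul hA, hAt, hBt, hAB, hprod]
  push_cast at hsum ⊢
  linear_combination (-(t : ℂ)) * hsum

theorem exists_norm_eq_one_eq_two_sub_two_re_mul_iff {a w : ℝ} (ha : 0 ≤ a) (hw : 0 < w) :
    (∃ z : ℂ, ‖z‖ = 1 ∧ a = (2 - 2 * z.re) * w) ↔ a ≤ 4 * w := by
  constructor
  · rintro ⟨z, hz, rfl⟩
    have hre : -1 ≤ z.re := (abs_le.1 (hz ▸ Complex.abs_re_le_norm z)).1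
    nlinarith
  · intro haw
    have hx : a / (2 * w) ≤ 2 := by rw [div_le_iff₀ (by positivity)]; linarith
    have hx' : 0 ≤ a / (2 * w) := by positivity
    refine ⟨Complex.exp (Real.arccos (1 - a / (2 * w)) * Complex.I),
      Complex.norm_exp_ofReal_mul_I _, ?_⟩
    rw [Complex.exp_ofReal_mul_I_re, Real.cos_arccos (by linarith) (by linarith)]
    field_simp
    ring

theorem sq_mul_add_one_le_two_mul_iff {m d : ℤ} (hd : 1 ≤ d) :
    m ^ 2 * (d + 1) ≤ 2 * d ↔ -1 ≤ m ∧ m ≤ 1 := by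
  rw [← abs_le, ← sq_le_one_iff_abs_le_one]
  constructor
  · intro h
    by_contra! hm
    nlinarith
  · intro h
    nlinarith [sq_nonneg m]

noncomputable def maxEquiangularAngle (d r : ℕ) : ℝ :=
  r * (r * d + r - 2) / ((d + 2) * (d - 1))

theorem sub_maxEquiangularAngle {d : ℕ} (hd : 2 ≤ d) (r : ℕ) :
    r - maxEquiangularAngle d r = r * (d - r) * (d + 1) / ((d + 2) * (d - 1)) := by
  have hdR : (2 : ℝ) ≤ d := by exact_mod_cast hd
  have hden : ((d : ℝ) + 2) * (d - 1) ≠ 0 := by nlinarith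
  rw [maxEquiangularAngle, eq_div_iff hden, sub_mul, div_mul_cancel₀ _ hden]
  ring

theorem maxEquiangularAngle_lt {d r : ℕ} (hr : 1 ≤ r) (hrd : r < d) :
    maxEquiangularAngle d r < r := by
  have hdR : (r : ℝ) + 1 ≤ d := by exact_mod_cast hrd
  have hrR : (1 : ℝ) ≤ r := by exact_mod_cast hr
  rw [← sub_pos, sub_maxEquiangularAngle (by omega)]
  exact div_pos (mul_pos (mul_pos (by linarith) (by linarith)) (by linarith)) (by nlinarith)

theorem le_four_mul_sub_maxEquiangularAngle_iff {d : ℕ} (hd : 2 ≤ d) (r : ℕ) :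
    (d : ℝ) ≤ 4 * (r - maxEquiangularAngle d r) ↔ 2 * r - 1 ≤ d ∧ d ≤ 2 * r + 1 := by
  have hdR : (2 : ℝ) ≤ d := by exact_mod_cast hd
  have hden : (0 : ℝ) < (d + 2) * (d - 1) := by nlinarith
  -- `4 r (d - r) (d + 1) - d (d + 2) (d - 1) = 2 d - (d - 2 r)² (d + 1)`
  have hpoly : (d : ℝ) * ((d + 2) * (d - 1)) ≤ 4 * (r * (d - r) * (d + 1))
      ↔ ((d : ℤ) - 2 * r) ^ 2 * (d + 1) ≤ 2 * d := by
    rw [← Int.cast_le (R := ℝ)]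
    push_cast
    constructor <;> intro h <;> linarith
  rw [sub_maxEquiangularAngle hd, mul_div_assoc', le_div_iff₀ hden, hpoly,
    sq_mul_add_one_le_two_mul_iff (by omega)]
  omega

theorem equiangular_projections_unitaries_iff_general
    {d r : ℕ} (hr : 1 ≤ r) (hrd : r < d)
    (P : Fin (d * (d + 1) / 2) → Matrix (Fin d) (Fin d) ℝ)
    (hidem : ∀ i, P i * P i = P i)
    (hsymm : ∀ i, (P i)ᵀ = P i)
    (hrank : ∀ i, (P i).rank = r)
    (hang : ∀ i j, i ≠ j → Matrix.trace (P i * P j)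
        = (r : ℝ) * ((r : ℝ) * (d : ℝ) + (r : ℝ) - 2) / (((d : ℝ) + 2) * ((d : ℝ) - 1))) :
    (∃ z : ℂ, ‖z‖ = 1 ∧
      (∀ i, (1 - (1 - z) • (P i).map Complex.ofReal) ∈ Matrix.unitaryGroup (Fin d) ℂ) ∧
      (∀ i j, i ≠ j →
        Matrix.trace ((1 - (1 - z) • (P i).map Complex.ofReal)ᴴ *
          (1 - (1 - z) • (P j).map Complex.ofReal)) = 0))
    ↔ (2 * r - 1 ≤ d ∧ d ≤ 2 * r + 1) := by
  have hd : 2 ≤ d := by omega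
  have hQ i : IsStarProjection ((P i).map Complex.ofReal) :=
    isStarProjection_map_ofReal (hidem i) (hsymm i)
  have htr i : ((P i).map Complex.ofReal).trace = ((r : ℝ) : ℂ) := by
    rw [trace_map_ofReal, trace_eq_rank_of_isIdempotentElem (hidem i), hrank i]
  set w := (r : ℝ) - maxEquiangularAngle d r
  have htrace (z : ℂ) (hz : ‖z‖ = 1) i j (hij : i ≠ j) :
      ((1 - (1 - z) • (P i).map Complex.ofReal)ᴴ *
          (1 - (1 - z) • (P j).map Complex.ofReal)).trace =
        ((d - (2 - 2 * z.re) * w : ℝ) : ℂ) := by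
    have hQQ : ((P i).map Complex.ofReal * (P j).map Complex.ofReal).trace
        = ((maxEquiangularAngle d r : ℝ) : ℂ) := by
      rw [← map_ofReal_mul, trace_map_ofReal, hang i j hij, maxEquiangularAngle]
    rw [trace_conjTranspose_one_sub_smul_mul_of_norm_eq_one (hQ i).isSelfAdjoint (htr i) (htr j)
      hQQ hz, Fintype.card_fin]
  have : Nontrivial (Fin (d * (d + 1) / 2)) :=
    Fin.nontrivial_iff_two_le.2 (by rw [Nat.le_div_iff_mul_le two_pos]; nlinarith)
  obtain ⟨i₀, j₀, hij₀⟩ := exists_pair_ne (Fin (d * (d + 1) / 2))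
  calc _ ↔ ∃ z : ℂ, ‖z‖ = 1 ∧ (d : ℝ) = (2 - 2 * z.re) * w := by
        refine exists_congr fun z => ⟨?_, ?_⟩
        · rintro ⟨hz, -, horth⟩
          have := horth i₀ j₀ hij₀
          rw [htrace z hz i₀ j₀ hij₀, Complex.ofReal_eq_zero] at this
          exact ⟨hz, by linarith⟩
        · rintro ⟨hz, hdz⟩
          refine ⟨hz, fun i => (hQ i).one_sub_smul_mem_unitary hz, fun i j hij => ?_⟩
          rw [htrace z hz i j hij, hdz, sub_self, Complex.ofReal_zero]
    _ ↔ (d : ℝ) ≤ 4 * w := exists_norm_eq_one_eq_two_sub_two_re_mul_iff (Nat.cast_nonneg d)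
        (sub_pos.2 (maxEquiangularAngle_lt hr hrd))
    _ ↔ _ := le_four_mul_sub_maxEquiangularAngle_iff hd r

/-- for d(d+1)/2 real rank-r equiangular projections with the maximal
angle β = r(rd+r−2)/((d+2)(d−1)) spanning S_d, a unimodular z making the matrices
U_i = I − (1−z)P_i unitary and pairwise trace-orthogonal exists iff 2r−1 ≤ d ≤ 2r+1. -/
theorem equiangular_projections_unitaries_iff
    {d r : ℕ} (hr : 1 ≤ r) (hrd : r < d)
    (P : Fin (d * (d + 1) / 2) → Matrix (Fin d) (Fin d) ℝ)
    (hidem : ∀ i, P i * P i = P i)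
    (hsymm : ∀ i, (P i)ᵀ = P i)
    (hrank : ∀ i, (P i).rank = r)
    (hang : ∀ i j, i ≠ j → Matrix.trace (P i * P j)
        = (r : ℝ) * ((r : ℝ) * (d : ℝ) + (r : ℝ) - 2) / (((d : ℝ) + 2) * ((d : ℝ) - 1)))
    (hspan : Submodule.span ℂ (Set.range fun i => (P i).map Complex.ofReal)
        = symMatrices d) :
    (∃ z : ℂ, ‖z‖ = 1 ∧
      (∀ i, (1 - (1 - z) • (P i).map Complex.ofReal) ∈ Matrix.unitaryGroup (Fin d) ℂ) ∧
      (∀ i j, i ≠ j →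
        Matrix.trace ((1 - (1 - z) • (P i).map Complex.ofReal)ᴴ *
          (1 - (1 - z) • (P j).map Complex.ofReal)) = 0))
    ↔ (2 * r - 1 ≤ d ∧ d ≤ 2 * r + 1) :=
  equiangular_projections_unitaries_iff_general hr hrd P hidem hsymm hrank hang
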